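/- Let W ⊆ E be a linear subspace that is stable under z (i.e. zW ⊆ W) and contained in im(z). Then the subspace (z^{-1}W) ∩ W^⊥ of E has complex dimension 2. -/

import Mathlib

open scoped ComplexInnerProductSpace

noncomputable section

abbrev E (N : ℕ) := EuclideanSpace ℂ (Fin N ⊕ Fin N)

def zmap (N : ℕ) : E N →ₗ[ℂ] E N where
  toFun v := WithLp.toLp 2 fun i =>
    match i with
    | Sum.inl j => if h : (j : ℕ) + 1 < N then v (Sum.inl ⟨(j : ℕ) + 1, h⟩) else 0
    | Sum.inr j => if h : (j : ℕ) + 1 < N then v (Sum.inr ⟨(j : ℕ) + 1, h⟩) else 0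
  map_add' u v := by
    ext i
    rcases i with j | j <;> simp only [PiLp.add_apply] <;> split <;> simp
  map_smul' c v := by
    ext i
    rcases i with j | j <;> simp only [PiLp.smul_apply, RingHom.id_apply, smul_eq_mul] <;>
      split <;> simp

def Cmap (N : ℕ) : E N →ₗ[ℂ] EuclideanSpace ℂ (Fin 2) where
  toFun v := WithLp.toLp 2 fun i => if i = 0 then ∑ j : Fin N, v (Sum.inl j) else ∑ j : Fin N, v (Sum.inr j)
  map_add' u v := by
    ext i
    by_cases h : i = (0 : Fin 2) <;> simp [h, PiLp.add_apply, Finset.sum_add_distrib]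
  map_smul' c v := by
    ext i
    by_cases h : i = (0 : Fin 2) <;> simp [h, PiLp.smul_apply, Finset.mul_sum]

/-- `Ym N m` : complete flags `0 = L_0 ⊊ L_1 ⊊ … ⊊ L_m` of `z`-stable subspaces of `E`
with `dim L_j = j`.  A tuple `(L_1,…,L_m) ∈ Y_m` is encoded as the function
`L : Fin (m+1) → Submodule ℂ (E N)` with the convention `L 0 = 0`. -/
def Ym (N m : ℕ) : Set (Fin (m + 1) → Submodule ℂ (E N)) :=
  {L | L 0 = ⊥ ∧ StrictMono L ∧ (∀ j : Fin (m + 1), Module.finrank ℂ (L j) = (j : ℕ)) ∧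
    ∀ j : Fin (m + 1), (L j).map (zmap N) ≤ L j}

/-- The map `φ_m`, in coordinates: `φ_m(L)_j = C(L_{j+1} ∩ L_j^⊥)` (0-based `j`),
i.e. the tuple `(C(L_1), C(L_2 ∩ L_1^⊥), …, C(L_m ∩ L_{m-1}^⊥))`. -/
def phiRaw (N m : ℕ) (L : Fin (m + 1) → Submodule ℂ (E N)) :
    Fin m → Submodule ℂ (EuclideanSpace ℂ (Fin 2)) :=
  fun j => ((L j.succ) ⊓ (L j.castSucc)ᗮ).map (Cmap N)

/-- `X_{m,i} = {(L_1,…,L_m) ∈ Y_m : L_{i+1} = z^{-1}(L_{i-1})}` (with `L_0 = 0`). -/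
def Xmi (N m i : ℕ) : Set (Fin (m + 1) → Submodule ℂ (E N)) :=
  {L | L ∈ Ym N m ∧ ∀ (h : i + 1 < m + 1) (h' : i - 1 < m + 1),
    L ⟨i + 1, h⟩ = (L ⟨i - 1, h'⟩).comap (zmap N)}

/-- `A_{m,i} = {(l_1,…,l_m) ∈ (ℙ¹)^m : l_{i+1} = l_i^⊥}`; a point of `(ℙ¹)^m` is encoded
as a tuple of rank-one subspaces of `ℂ²`, the line `l_k` sitting at 0-based index `k-1`. -/
def Ami (m i : ℕ) : Set (Fin m → Submodule ℂ (EuclideanSpace ℂ (Fin 2))) :=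
  {l | (∀ j, Module.finrank ℂ (l j) = 1) ∧
    ∀ (h : i < m) (h' : i - 1 < m), l ⟨i, h⟩ = (l ⟨i - 1, h'⟩)ᗮ}

/-- `q_{m,i}(L_1,…,L_m) = (L_1,…,L_{i-1}, zL_{i+2},…,zL_m)`. -/
def qRaw (N m i : ℕ) (hm : 2 ≤ m) (L : Fin (m + 1) → Submodule ℂ (E N)) :
    Fin (m - 2 + 1) → Submodule ℂ (E N) :=
  fun j =>
    if (j : ℕ) < i then L ⟨(j : ℕ), by have := j.isLt; omega⟩
    else (L ⟨(j : ℕ) + 2, by have := j.isLt; omega⟩).map (zmap N)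

/-- The forgetful map `g_{m,i}(l_1,…,l_m) = (l_1,…,l_{i-1}, l_{i+2},…,l_m)`. -/
def gRaw (m i : ℕ) (l : Fin m → Submodule ℂ (EuclideanSpace ℂ (Fin 2))) :
    Fin (m - 2) → Submodule ℂ (EuclideanSpace ℂ (Fin 2)) :=
  fun k =>
    if (k : ℕ) + 1 < i then l ⟨(k : ℕ), by have := k.isLt; omega⟩
    else l ⟨(k : ℕ) + 2, by have := k.isLt; omega⟩

/-- The involution `I_{2n}` of `(ℙ¹)^m`: `l_j ↦ l_j` for `j` odd, `l_j ↦ l_j^⊥` for `j` even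
(the line `l_j` sits at 0-based index `j-1`). -/
def Imap (m : ℕ) (l : Fin m → Submodule ℂ (EuclideanSpace ℂ (Fin 2))) :
    Fin m → Submodule ℂ (EuclideanSpace ℂ (Fin 2)) :=
  fun k => if (k : ℕ) % 2 = 0 then l k else (l k)ᗮ

/-- A crossingless matching of the `2n` points `{1,…,2n}`: a partition of `{1,…,2n}` into
`n` pairs (each pair recorded as `(i,j)` with `i < j`) such that there is no quadruple
`i < j < k < l` with `(i,k)` and `(j,l)` paired. -/
structure CrossinglessMatching (n : ℕ) where
  pairs : Finset (ℕ × ℕ)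
  card_eq : pairs.card = n
  lt : ∀ p ∈ pairs, p.1 < p.2
  mem_range : ∀ p ∈ pairs, 1 ≤ p.1 ∧ p.2 ≤ 2 * n
  cover : ∀ k, 1 ≤ k → k ≤ 2 * n → ∃! p, p ∈ pairs ∧ (p.1 = k ∨ p.2 = k)
  noncross : ∀ i j k l : ℕ, i < j → j < k → k < l → (i, k) ∈ pairs → (j, l) ∉ pairs

open Fin.NatCast

/-- `{(L_1,…,L_m) ∈ Y_m : L_{s_a(j)} = z^{-d_a(j)} L_{j-1} for all j ∈ O_a}`, where for a
pair `(i,j)` of the matching, `s_a(i) = j`, `d_a(i) = (j-i+1)/2`, and `z^{-d}` is the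
`d`-fold preimage under `z`. -/
def KaSet (N m : ℕ) (pairs : Finset (ℕ × ℕ)) : Set (Fin (m + 1) → Submodule ℂ (E N)) :=
  {L | L ∈ Ym N m ∧ ∀ p ∈ pairs,
    L ((p.2 : Fin (m + 1))) =
      (L ((p.1 - 1 : ℕ) : Fin (m + 1))).comap ((zmap N) ^ ((p.2 - p.1 + 1) / 2))}

/-- `S_a = {(l_1,…,l_{2n}) ∈ (ℙ¹)^{2n} : l_{s_a(j)} = l_j ∀ j ∈ O_a}` (0-based indexing, so
`l_k` sits at index `k-1`). -/
def SaSet (m : ℕ) (pairs : Finset (ℕ × ℕ)) :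
    Set (Fin m → Submodule ℂ (EuclideanSpace ℂ (Fin 2))) :=
  {l | (∀ j, Module.finrank ℂ (l j) = 1) ∧
    ∀ p ∈ pairs, ∀ (h2 : p.2 - 1 < m) (h1 : p.1 - 1 < m), l ⟨p.2 - 1, h2⟩ = l ⟨p.1 - 1, h1⟩}

/-- `T_a = {(l_1,…,l_{2n}) ∈ (ℙ¹)^{2n} : l_{s_a(j)} = l_j^⊥ ∀ j ∈ O_a}`. -/
def TaSet (m : ℕ) (pairs : Finset (ℕ × ℕ)) :
    Set (Fin m → Submodule ℂ (EuclideanSpace ℂ (Fin 2))) :=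
  {l | (∀ j, Module.finrank ℂ (l j) = 1) ∧
    ∀ p ∈ pairs, ∀ (h2 : p.2 - 1 < m) (h1 : p.1 - 1 < m), l ⟨p.2 - 1, h2⟩ = (l ⟨p.1 - 1, h1⟩)ᗮ}

/-! Since `zW ⊆ W`, the preimage `z⁻¹W` contains `W`, and since `W ⊆ im z`, rank–nullity for
`z` restricted to `z⁻¹W` gives `dim z⁻¹W = dim W + dim ker z = dim W + 2`. The orthogonal
complement of `W` inside `z⁻¹W` is therefore `2`-dimensional. -/

namespace Submodule

variable {K V V' : Type*} [DivisionRing K] [AddCommGroup V] [Module K V] [AddCommGroup V']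
  [Module K V'] [FiniteDimensional K V]

theorem finrank_comap_of_le_range {f : V →ₗ[K] V'} {W : Submodule K V'}
    (hW : W ≤ LinearMap.range f) :
    Module.finrank K (W.comap f) = Module.finrank K W + Module.finrank K (LinearMap.ker f) := by
  have hrange : LinearMap.range (f.domRestrict (W.comap f)) = W := by
    rw [LinearMap.range_domRestrict, map_comap_eq_self hW]
  rw [← (f.domRestrict (W.comap f)).finrank_range_add_finrank_ker, hrange,
    LinearMap.ker_domRestrict, (comapSubtypeEquivOfLe (LinearMap.ker_le_comap f)).finrank_eq]

end Submodule

section Shift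

variable {N : ℕ}

@[simp]
lemma zmap_apply_inl (v : E N) (j : Fin N) :
    zmap N v (Sum.inl j) = if h : (j : ℕ) + 1 < N then v (Sum.inl ⟨j + 1, h⟩) else 0 := rfl

@[simp]
lemma zmap_apply_inr (v : E N) (j : Fin N) :
    zmap N v (Sum.inr j) = if h : (j : ℕ) + 1 < N then v (Sum.inr ⟨j + 1, h⟩) else 0 := rfl

lemma apply_eq_zero_of_mem_ker_zmap {v : E N} (hv : v ∈ LinearMap.ker (zmap N)) {j : Fin N}
    (hj : 0 < (j : ℕ)) : v (Sum.inl j) = 0 ∧ v (Sum.inr j) = 0 := by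
  have hprev : (j : ℕ) - 1 + 1 < N := by omega
  have hj' : (⟨(j : ℕ) - 1 + 1, hprev⟩ : Fin N) = j := Fin.ext (by simp only; omega)
  have hz := LinearMap.mem_ker.mp hv
  have hl := congrArg (· (Sum.inl ⟨(j : ℕ) - 1, by omega⟩)) hz
  have hr := congrArg (· (Sum.inr ⟨(j : ℕ) - 1, by omega⟩)) hz
  simp only [zmap_apply_inl, zmap_apply_inr, dif_pos hprev, hj', PiLp.zero_apply] at hl hr
  exact ⟨hl, hr⟩

def kerZmapEquiv (hN : 0 < N) : LinearMap.ker (zmap N) ≃ₗ[ℂ] ℂ × ℂ where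
  toFun v := (v.1 (Sum.inl ⟨0, hN⟩), v.1 (Sum.inr ⟨0, hN⟩))
  map_add' u v := rfl
  map_smul' c v := rfl
  invFun a := ⟨EuclideanSpace.single (Sum.inl ⟨0, hN⟩) a.1 +
      EuclideanSpace.single (Sum.inr ⟨0, hN⟩) a.2, by
    rw [LinearMap.mem_ker]
    ext (j | j) <;> simp [Fin.ext_iff]⟩
  left_inv v := by
    ext (j | j) <;> rcases Nat.eq_zero_or_pos (j : ℕ) with hj | hj
    · obtain rfl : j = ⟨0, hN⟩ := Fin.ext hj
      simp
    · simp [Fin.ext_iff, hj.ne', (apply_eq_zero_of_mem_ker_zmap v.2 hj).1]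
    · obtain rfl : j = ⟨0, hN⟩ := Fin.ext hj
      simp
    · simp [Fin.ext_iff, hj.ne', (apply_eq_zero_of_mem_ker_zmap v.2 hj).2]
  right_inv a := by simp

lemma finrank_ker_zmap (hN : 0 < N) : Module.finrank ℂ (LinearMap.ker (zmap N)) = 2 := by
  rw [(kerZmapEquiv hN).finrank_eq, Module.finrank_prod, Module.finrank_self]

end Shift

theorem dim_preimage_inter_orthogonal_eq_two (N : ℕ) (hN : 1 ≤ N)
    (W : Submodule ℂ (E N)) (hstab : W.map (zmap N) ≤ W)
    (him : W ≤ LinearMap.range (zmap N)) :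
    Module.finrank ℂ (↥(W.comap (zmap N) ⊓ Wᗮ)) = 2 := by
  have hle : W ≤ W.comap (zmap N) := Submodule.map_le_iff_le_comap.mp hstab
  have hsplit := Submodule.finrank_add_inf_finrank_orthogonal hle
  have hcomap := Submodule.finrank_comap_of_le_range him
  rw [finrank_ker_zmap hN] at hcomap
  rw [inf_comm]
  omega
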